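/- The ideal of R generated by the set 𝒢_{D_{2m}} equals the toric ideal I_{D_{2m}} = ker π. -/

import Mathlib

open MvPolynomial

/-- Index type for the variables of the polynomial ring `R` in the `D_{2m}` case (`n = 2m`).
The set `J = {3,5,…,n-1}` of odd integers is realised as `{2t+3 | t : Fin (m-1)}` and
`J^c = {2,4,…,n-2}` as `{2t+2 | t : Fin (m-1)}`.  The constructors are:
`x1 ↦ x_1`, `xn ↦ x_n`, `xJ t ↦ x_{2t+3}` (`2t+3 ∈ J`), `xJc t ↦ x_{2t+2}` (`2t+2 ∈ J^c`),
`xP s t _ ↦ x_{2s+3,2t+3}` (a pair `k < ℓ` in `J`), `y t ↦ y_{2t+3}`. -/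
inductive DVar (m : ℕ) : Type where
  | x1 : DVar m
  | xn : DVar m
  | xJ : Fin (m - 1) → DVar m
  | xJc : Fin (m - 1) → DVar m
  | xP : (s t : Fin (m - 1)) → s < t → DVar m
  | y : Fin (m - 1) → DVar m

/-- The images of the variables under `π`, where `u_i = X i` inside
`K[u_1,…,u_n] ⊆ MvPolynomial ℕ K`:
`π(x_1) = u_1²`, `π(x_n) = u_n²` (`n = 2m`), `π(x_i) = u_i²` for `i ∈ J`,
`π(x_j) = u_j` for `j ∈ J^c`, `π(x_{k,ℓ}) = u_k u_ℓ` for `k < ℓ` in `J`, and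
`π(y_i) = u_i u_1 u_n` for `i ∈ J`. -/
noncomputable def dImage (K : Type*) [Field K] (m : ℕ) : DVar m → MvPolynomial ℕ K
  | .x1 => X 1 ^ 2
  | .xn => X (2 * m) ^ 2
  | .xJ t => X (2 * t.val + 3) ^ 2
  | .xJc t => X (2 * t.val + 2)
  | .xP s t _ => X (2 * s.val + 3) * X (2 * t.val + 3)
  | .y t => X (2 * t.val + 3) * X 1 * X (2 * m)

/-- The toric map `π : R → K[u_1,…,u_n]` for the `D_{2m}` configuration. -/
noncomputable def piD (K : Type*) [Field K] (m : ℕ) :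
    MvPolynomial (DVar m) K →ₐ[K] MvPolynomial ℕ K :=
  aeval (dImage K m)

/-- The set `𝒢_{D_{2m}}` of binomials. -/
noncomputable def GD (K : Type*) [Field K] (m : ℕ) : Set (MvPolynomial (DVar m) K) :=
  {g | (∃ (i j k l : Fin (m - 1)) (hij : i < j) (hjk : j < k) (hkl : k < l),
          g = X (DVar.xP i k (hij.trans hjk)) * X (DVar.xP j l (hjk.trans hkl))
              - X (DVar.xP i j hij) * X (DVar.xP k l hkl) ∨
          g = X (DVar.xP i l (hij.trans (hjk.trans hkl))) * X (DVar.xP j k hjk)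
              - X (DVar.xP i j hij) * X (DVar.xP k l hkl)) ∨
      (∃ (i j k : Fin (m - 1)) (hij : i < j) (hjk : j < k),
          g = X (DVar.xP i j hij) * X (DVar.xP i k (hij.trans hjk))
              - X (DVar.xJ i) * X (DVar.xP j k hjk) ∨
          g = X (DVar.xJ j) * X (DVar.xP i k (hij.trans hjk))
              - X (DVar.xP i j hij) * X (DVar.xP j k hjk) ∨
          g = X (DVar.xJ k) * X (DVar.xP i j hij)
              - X (DVar.xP i k (hij.trans hjk)) * X (DVar.xP j k hjk) ∨
          g = X (DVar.xP j k hjk) * X (DVar.y i)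
              - X (DVar.xP i j hij) * X (DVar.y k) ∨
          g = X (DVar.xP i k (hij.trans hjk)) * X (DVar.y j)
              - X (DVar.xP i j hij) * X (DVar.y k)) ∨
      (∃ (i j : Fin (m - 1)) (hij : i < j),
          g = X (DVar.xJ i) * X (DVar.xJ j) - X (DVar.xP i j hij) ^ 2 ∨
          g = X (DVar.xJ j) * X (DVar.y i) - X (DVar.xP i j hij) * X (DVar.y j) ∨
          g = X (DVar.xP i j hij) * X (DVar.y i) - X (DVar.xJ i) * X (DVar.y j) ∨
          g = X (DVar.xP i j hij) * X DVar.x1 * X DVar.xn - X (DVar.y i) * X (DVar.y j)) ∨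
      (∃ i : Fin (m - 1),
          g = X (DVar.xJ i) * X DVar.x1 * X DVar.xn - X (DVar.y i) ^ 2)}

/-!
`π` sends the monomial `x^a` to the monomial `u^(E a)`, where `E a = ∑ a_v • expo v` is additive,
so `ker π` is spanned by the binomials `x^a - x^b` with `E a = E b`. Read each binomial of `𝒢` as
a rewriting rule `lhs → rhs`. The weight `x_{k,ℓ} ↦ 3^ℓ`, `x_ℓ ↦ 2·3^ℓ` (for `k < ℓ` in `J`)
drops along every rule, so every monomial is congruent modulo `(𝒢)` to a reduced one (divisible
by no `lhs`) with the same image. Two reduced monomials with the same image share a variable: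
if some `y` occurs, it is `y_T` for the largest `T ∈ J` with `u_T` dividing the image; otherwise
it is `x_{S,T}` for the two largest such indices, or `x_T` if there is only one, or else one of
`x_1`, `x_n`, `x_j` (`j ∈ J^c`). Cancelling it and inducting, reduced monomials are determined by
their image, and `x^a - x^b` is the difference of the two reduction chains.
-/

namespace MvPolynomial

variable {σ τ R : Type*}

theorem aeval_monomial_monomial [CommSemiring R] (w : σ → τ →₀ ℕ) (a : σ →₀ ℕ) (c : R) :
    aeval (fun v => monomial (w v) (1 : R)) (monomial a c) = monomial (Finsupp.weight w a) c := by
  rw [aeval_monomial, Finsupp.weight_apply, monomial_finsupp_sum_index, algebraMap_eq]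
  simp only [monomial_pow, one_pow]

theorem ker_aeval_monomial_le [CommRing R] {w : σ → τ →₀ ℕ} {I : Ideal (MvPolynomial σ R)}
    (hI : ∀ a b, Finsupp.weight w a = Finsupp.weight w b → monomial a (1 : R) - monomial b 1 ∈ I) :
    RingHom.ker (aeval fun v => monomial (w v) (1 : R)) ≤ I := by
  classical
  intro f hf
  set E : (σ →₀ ℕ) →+ τ →₀ ℕ := Finsupp.weight w
  -- `rep e` is one fixed exponent in the fibre of `e`: moving every term of `f` to the
  -- representative of its fibre costs an element of `I` and leaves the fibre sums of the
  -- coefficients, which are the coefficients of `π f = 0`.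
  set rep := Function.invFun E
  have hrep (a : σ →₀ ℕ) : E (rep (E a)) = E a := Function.invFun_eq ⟨a, rfl⟩
  have himage : aeval (fun v => monomial (w v) (1 : R)) f =
      ∑ a ∈ f.support, monomial (E a) (coeff a f) := by
    conv_lhs => rw [f.as_sum]
    simp only [map_sum, aeval_monomial_monomial, E]
  have hfiber (e : τ →₀ ℕ) : ∑ a ∈ f.support with E a = e, coeff a f = 0 := by
    have h := congrArg (coeff e) himage
    rw [RingHom.mem_ker.1 hf, coeff_zero, coeff_sum] at h
    simpa [coeff_monomial, Finset.sum_filter] using h.symm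
  have hreps : ∑ a ∈ f.support, monomial (rep (E a)) (coeff a f) = 0 := by
    rw [← Finset.sum_fiberwise_of_maps_to fun a ha => Finset.mem_image_of_mem E ha]
    refine Finset.sum_eq_zero fun e _ => ?_
    rw [Finset.sum_congr rfl fun a ha => by rw [(Finset.mem_filter.1 ha).2], ← map_sum,
      hfiber, map_zero]
  have hf : f = ∑ a ∈ f.support, C (coeff a f) * (monomial a 1 - monomial (rep (E a)) 1) := by
    simp only [mul_sub, C_mul_monomial, mul_one, Finset.sum_sub_distrib, hreps, sub_zero]
    exact f.as_sum
  rw [hf]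
  exact I.sum_mem fun a _ => I.mul_mem_left _ (hI _ _ (hrep a).symm)

theorem exists_reduced_sub_mem [CommRing R] {ι M : Type*} [AddCommMonoid M]
    {I : Ideal (MvPolynomial σ R)} (lhs rhs : ι → σ →₀ ℕ) (E : (σ →₀ ℕ) →+ M)
    (ν : (σ →₀ ℕ) →+ ℕ) (hI : ∀ i, monomial (lhs i) (1 : R) - monomial (rhs i) 1 ∈ I)
    (hE : ∀ i, E (lhs i) = E (rhs i)) (hν : ∀ i, ν (rhs i) < ν (lhs i)) (a : σ →₀ ℕ) :
    ∃ b, (∀ i, ¬ lhs i ≤ b) ∧ E b = E a ∧ monomial a (1 : R) - monomial b 1 ∈ I := by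
  induction hn : ν a using Nat.strong_induction_on generalizing a with
  | _ n ih =>
  by_cases hred : ∃ i, lhs i ≤ a
  · obtain ⟨i, c, rfl⟩ : ∃ i c, a = lhs i + c := by
      obtain ⟨i, hi⟩ := hred
      exact ⟨i, exists_add_of_le hi⟩
    obtain ⟨b, hb, hEb, hmem⟩ := ih _
      (by rw [← hn, map_add, map_add]; exact Nat.add_lt_add_right (hν i) _) (rhs i + c) rfl
    refine ⟨b, hb, by rw [hEb, map_add, map_add, hE], ?_⟩
    have hstep : monomial (lhs i + c) (1 : R) - monomial b 1 =
        monomial c 1 * (monomial (lhs i) 1 - monomial (rhs i) 1) +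
          (monomial (rhs i + c) 1 - monomial b 1) := by
      simp only [mul_sub, monomial_mul, mul_one, add_comm c]
      ring
    rw [hstep]
    exact I.add_mem (I.mul_mem_left _ (hI i)) hmem
  · push Not at hred
    exact ⟨a, hred, rfl, by simp⟩

end MvPolynomial

namespace Finsupp

variable {σ τ M : Type*}

theorem single_add_single_le {f : σ →₀ ℕ} {a b : σ} (hab : a ≠ b) (ha : 0 < f a) (hb : 0 < f b) :
    single a 1 + single b 1 ≤ f := by
  classical
  intro v
  simp only [coe_add, Pi.add_apply, single_apply]
  split_ifs <;> subst_vars <;> first | omega | contradiction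

theorem single_add_single_add_single_le {f : σ →₀ ℕ} {a b c : σ} (hab : a ≠ b) (hac : a ≠ c)
    (hbc : b ≠ c) (ha : 0 < f a) (hb : 0 < f b) (hc : 0 < f c) :
    single a 1 + single b 1 + single c 1 ≤ f := by
  classical
  intro v
  simp only [coe_add, Pi.add_apply, single_apply]
  split_ifs <;> subst_vars <;> first | omega | contradiction

theorem eq_of_forall_exists_pos_pos [AddCommMonoid M] [IsLeftCancelAdd M]
    {P : (σ →₀ ℕ) → Prop} (hP : Antitone P) (E : (σ →₀ ℕ) →+ M)
    (h : ∀ a b, P a → P b → E a = E b → a ≠ 0 → ∃ v, 0 < a v ∧ 0 < b v)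
    {a b : σ →₀ ℕ} (ha : P a) (hb : P b) (hab : E a = E b) : a = b := by
  induction a using WellFoundedLT.induction generalizing b with
  | _ a ih =>
  by_cases ha0 : a = 0
  · by_contra hne
    obtain ⟨v, -, hav⟩ := h b a hb ha hab.symm (ha0 ▸ Ne.symm hne)
    simp [ha0] at hav
  obtain ⟨v, hav, hbv⟩ := h a b ha hb hab ha0
  obtain ⟨c, rfl⟩ := exists_add_of_le (single_le_iff.2 hav : single v 1 ≤ a)
  obtain ⟨d, rfl⟩ := exists_add_of_le (single_le_iff.2 hbv : single v 1 ≤ b)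
  have hlt : c < single v 1 + c :=
    lt_add_of_pos_left c (pos_iff_ne_zero.2 (single_ne_zero.2 one_ne_zero))
  rw [map_add, map_add] at hab
  rw [ih c hlt (hP le_add_self ha) (hP le_add_self hb) (add_left_cancel hab)]

theorem exists_pos_of_weight_apply_pos {w : σ → τ →₀ ℕ} {a : σ →₀ ℕ} {j : τ}
    (h : 0 < weight w a j) : ∃ v, 0 < a v ∧ 0 < w v j := by
  rw [weight_apply, Finsupp.sum_apply] at h
  obtain ⟨v, -, hne⟩ := Finset.exists_ne_zero_of_sum_ne_zero h.ne'
  simp only [Finsupp.smul_apply, smul_eq_mul, ne_eq, mul_eq_zero, not_or] at hne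
  exact ⟨v, pos_iff_ne_zero.2 hne.1, pos_iff_ne_zero.2 hne.2⟩

theorem weight_apply_pos {w : σ → τ →₀ ℕ} {a : σ →₀ ℕ} {v : σ} {j : τ}
    (ha : 0 < a v) (hw : 0 < w v j) : 0 < weight w a j := by
  obtain ⟨c, rfl⟩ := exists_add_of_le (single_le_iff.2 ha : single v 1 ≤ a)
  simpa [weight_single] using Nat.lt_add_right _ hw

end Finsupp

theorem exists_max_of_exists {α : Type*} [LinearOrder α] [Finite α] {p : α → Prop}
    (h : ∃ a, p a) : ∃ b, p b ∧ ∀ a, p a → a ≤ b := by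
  obtain ⟨b, hb, hmax⟩ := Set.exists_max_image {a | p a} id (Set.toFinite _) h
  exact ⟨b, hb, hmax⟩

namespace DVar

variable {m : ℕ}

noncomputable def expo (m : ℕ) : DVar m → ℕ →₀ ℕ
  | x1 => Finsupp.single 1 2
  | xn => Finsupp.single (2 * m) 2
  | xJ t => Finsupp.single (2 * t.val + 3) 2
  | xJc t => Finsupp.single (2 * t.val + 2) 1
  | xP s t _ => Finsupp.single (2 * s.val + 3) 1 + Finsupp.single (2 * t.val + 3) 1
  | y t => Finsupp.single (2 * t.val + 3) 1 + Finsupp.single 1 1 + Finsupp.single (2 * m) 1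

theorem dImage_eq_monomial (K : Type*) [Field K] (v : DVar m) :
    dImage K m v = monomial (expo m v) 1 := by
  cases v <;> simp [dImage, expo, X, monomial_mul, monomial_pow]

/-- Base `3` makes `x_{i,j} ↦ 3^j` outweigh `x_i ↦ 2·3^i` for `i < j`. -/
def height : DVar m → ℕ
  | xJ t => 2 * 3 ^ t.val
  | xP _ t _ => 3 ^ t.val
  | _ => 0

end DVar

open DVar Finsupp

theorem piD_eq_aeval (K : Type*) [Field K] (m : ℕ) :
    piD K m = aeval fun v => monomial (expo m v) 1 :=
  congrArg aeval (funext (dImage_eq_monomial K))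

theorem GD_subset_ker (K : Type*) [Field K] (m : ℕ) : GD K m ⊆ RingHom.ker (piD K m) := by
  intro g hg
  rw [SetLike.mem_coe, RingHom.mem_ker]
  rcases hg with ⟨i, j, k, l, hij, hjk, hkl, rfl | rfl⟩ |
    ⟨i, j, k, hij, hjk, rfl | rfl | rfl | rfl | rfl⟩ | ⟨i, j, hij, rfl | rfl | rfl | rfl⟩ |
    ⟨i, rfl⟩ <;>
  simp only [piD, map_sub, map_mul, map_pow, aeval_X, dImage] <;> ring

namespace GD

variable {m : ℕ}

/-- One rule per binomial of `GD`, in the order of its definition, rewriting `lhs` to `rhs`. -/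
inductive Rule (m : ℕ) where
  | r1a (i j k l : Fin (m - 1)) (hij : i < j) (hjk : j < k) (hkl : k < l)
  | r1b (i j k l : Fin (m - 1)) (hij : i < j) (hjk : j < k) (hkl : k < l)
  | r2a (i j k : Fin (m - 1)) (hij : i < j) (hjk : j < k)
  | r2b (i j k : Fin (m - 1)) (hij : i < j) (hjk : j < k)
  | r2c (i j k : Fin (m - 1)) (hij : i < j) (hjk : j < k)
  | r2d (i j k : Fin (m - 1)) (hij : i < j) (hjk : j < k)
  | r2e (i j k : Fin (m - 1)) (hij : i < j) (hjk : j < k)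
  | r3a (i j : Fin (m - 1)) (hij : i < j)
  | r3b (i j : Fin (m - 1)) (hij : i < j)
  | r3c (i j : Fin (m - 1)) (hij : i < j)
  | r3d (i j : Fin (m - 1)) (hij : i < j)
  | r4 (i : Fin (m - 1))

namespace Rule

noncomputable def lhs : Rule m → DVar m →₀ ℕ
  | r1a i j k l hij hjk hkl =>
    single (xP i k (hij.trans hjk)) 1 + single (xP j l (hjk.trans hkl)) 1
  | r1b i j k l hij hjk hkl =>
    single (xP i l (hij.trans (hjk.trans hkl))) 1 + single (xP j k hjk) 1
  | r2a i j k hij hjk => single (xP i j hij) 1 + single (xP i k (hij.trans hjk)) 1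
  | r2b i j k hij hjk => single (xJ j) 1 + single (xP i k (hij.trans hjk)) 1
  | r2c i j k hij _ => single (xJ k) 1 + single (xP i j hij) 1
  | r2d i j k _ hjk => single (xP j k hjk) 1 + single (y i) 1
  | r2e i j k hij hjk => single (xP i k (hij.trans hjk)) 1 + single (y j) 1
  | r3a i j _ => single (xJ i) 1 + single (xJ j) 1
  | r3b i j _ => single (xJ j) 1 + single (y i) 1
  | r3c i j hij => single (xP i j hij) 1 + single (y i) 1
  | r3d i j hij => single (xP i j hij) 1 + single x1 1 + single xn 1
  | r4 i => single (xJ i) 1 + single x1 1 + single xn 1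

noncomputable def rhs : Rule m → DVar m →₀ ℕ
  | r1a i j k l hij _ hkl | r1b i j k l hij _ hkl =>
    single (xP i j hij) 1 + single (xP k l hkl) 1
  | r2a i j k _ hjk => single (xJ i) 1 + single (xP j k hjk) 1
  | r2b i j k hij hjk => single (xP i j hij) 1 + single (xP j k hjk) 1
  | r2c i j k hij hjk => single (xP i k (hij.trans hjk)) 1 + single (xP j k hjk) 1
  | r2d i j k hij _ | r2e i j k hij _ => single (xP i j hij) 1 + single (y k) 1
  | r3a i j hij => single (xP i j hij) 2
  | r3b i j hij => single (xP i j hij) 1 + single (y j) 1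
  | r3c i j _ => single (xJ i) 1 + single (y j) 1
  | r3d i j _ => single (y i) 1 + single (y j) 1
  | r4 i => single (y i) 2

theorem binomial_mem (K : Type*) [Field K] (r : Rule m) :
    monomial r.lhs (1 : K) - monomial r.rhs 1 ∈ GD K m := by
  have hX2 (a b : DVar m) : (X a * X b : MvPolynomial (DVar m) K) =
      monomial (single a 1 + single b 1) 1 := by
    rw [X, X, monomial_mul, one_mul]
  have hX3 (a b c : DVar m) : (X a * X b * X c : MvPolynomial (DVar m) K) =
      monomial (single a 1 + single b 1 + single c 1) 1 := by
    rw [hX2, X, monomial_mul, one_mul]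
  have hsq (a : DVar m) : (X a ^ 2 : MvPolynomial (DVar m) K) = monomial (single a 2) 1 :=
    X_pow_eq_monomial
  cases r with
  | r1a i j k l hij hjk hkl => exact .inl ⟨i, j, k, l, hij, hjk, hkl, .inl (by rw [hX2, hX2]; rfl)⟩
  | r1b i j k l hij hjk hkl => exact .inl ⟨i, j, k, l, hij, hjk, hkl, .inr (by rw [hX2, hX2]; rfl)⟩
  | r2a i j k hij hjk => exact .inr <| .inl ⟨i, j, k, hij, hjk, .inl (by rw [hX2, hX2]; rfl)⟩
  | r2b i j k hij hjk =>
    exact .inr <| .inl ⟨i, j, k, hij, hjk, .inr <| .inl (by rw [hX2, hX2]; rfl)⟩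
  | r2c i j k hij hjk =>
    exact .inr <| .inl ⟨i, j, k, hij, hjk, .inr <| .inr <| .inl (by rw [hX2, hX2]; rfl)⟩
  | r2d i j k hij hjk =>
    exact .inr <| .inl ⟨i, j, k, hij, hjk, .inr <| .inr <| .inr <| .inl (by rw [hX2, hX2]; rfl)⟩
  | r2e i j k hij hjk =>
    exact .inr <| .inl ⟨i, j, k, hij, hjk, .inr <| .inr <| .inr <| .inr (by rw [hX2, hX2]; rfl)⟩
  | r3a i j hij => exact .inr <| .inr <| .inl ⟨i, j, hij, .inl (by rw [hX2, hsq]; rfl)⟩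
  | r3b i j hij => exact .inr <| .inr <| .inl ⟨i, j, hij, .inr <| .inl (by rw [hX2, hX2]; rfl)⟩
  | r3c i j hij =>
    exact .inr <| .inr <| .inl ⟨i, j, hij, .inr <| .inr <| .inl (by rw [hX2, hX2]; rfl)⟩
  | r3d i j hij =>
    exact .inr <| .inr <| .inl ⟨i, j, hij, .inr <| .inr <| .inr (by rw [hX3, hX2]; rfl)⟩
  | r4 i => exact .inr <| .inr <| .inr ⟨i, by rw [hX3, hsq]; rfl⟩

theorem weight_expo_lhs_eq (r : Rule m) : weight (expo m) r.lhs = weight (expo m) r.rhs := by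
  have h := GD_subset_ker ℚ m (binomial_mem ℚ r)
  rw [SetLike.mem_coe, RingHom.mem_ker, map_sub, sub_eq_zero, piD_eq_aeval,
    aeval_monomial_monomial, aeval_monomial_monomial] at h
  exact monomial_left_injective one_ne_zero h

theorem weight_height_rhs_lt (r : Rule m) : weight height r.rhs < weight height r.lhs := by
  have h3 {a b : Fin (m - 1)} (h : a < b) : 3 * 3 ^ (a : ℕ) ≤ 3 ^ (b : ℕ) := by
    rw [← pow_succ']
    exact Nat.pow_le_pow_right (by norm_num) h
  have hpos (a : Fin (m - 1)) : 0 < 3 ^ (a : ℕ) := by positivity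
  cases r <;> simp only [lhs, rhs, map_add, weight_single, height, smul_eq_mul] <;> grind

end Rule

variable {a b : DVar m →₀ ℕ}

theorem pos_of_weight_odd_pos {t : Fin (m - 1)} (h : 0 < weight (expo m) a (2 * t + 3)) :
    0 < a (xJ t) ∨ 0 < a (y t) ∨ (∃ s h, 0 < a (xP s t h)) ∨ ∃ u h, 0 < a (xP t u h) := by
  obtain ⟨v, hv, hw⟩ := exists_pos_of_weight_apply_pos h
  cases v <;> simp only [expo, Finsupp.add_apply, single_apply] at hw <;>
    split_ifs at hw <;> simp_all [Fin.val_inj] <;> try omega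
  · exact .inr <| .inr <| .inr ⟨_, _, hv⟩
  · exact .inr <| .inr <| .inl ⟨_, _, hv⟩

theorem pos_x1_of_weight_pos (hy : ∀ t, a (y t) = 0) (h : 0 < weight (expo m) a 1) :
    0 < a x1 := by
  obtain ⟨v, hv, hw⟩ := exists_pos_of_weight_apply_pos h
  cases v <;> simp only [expo, Finsupp.add_apply, single_apply] at hw <;>
    split_ifs at hw <;> simp_all

theorem pos_xn_of_weight_pos (hy : ∀ t, a (y t) = 0) (h : 0 < weight (expo m) a (2 * m)) :
    0 < a xn := by
  obtain ⟨v, hv, hw⟩ := exists_pos_of_weight_apply_pos h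
  cases v <;> simp only [expo, Finsupp.add_apply, single_apply] at hw <;>
    split_ifs at hw <;> simp_all <;> omega

theorem pos_xJc_of_weight_pos {t : Fin (m - 1)} (h : 0 < weight (expo m) a (2 * t + 2)) :
    0 < a (xJc t) := by
  obtain ⟨v, hv, hw⟩ := exists_pos_of_weight_apply_pos h
  cases v <;> simp only [expo, Finsupp.add_apply, single_apply] at hw <;>
    split_ifs at hw <;> simp_all [Fin.val_inj] <;> omega

theorem pos_xJ_of_forall_eq (hy : ∀ t, a (y t) = 0) {T : Fin (m - 1)}
    (hT : 0 < weight (expo m) a (2 * T + 3))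
    (honly : ∀ u : Fin (m - 1), 0 < weight (expo m) a (2 * u + 3) → u = T) : 0 < a (xJ T) := by
  rcases pos_of_weight_odd_pos hT with hJ | hyT | ⟨s, hsT, hs⟩ | ⟨u, hTu, hu⟩
  · exact hJ
  · simp [hy] at hyT
  · exact absurd (honly s (weight_apply_pos hs (by simp [expo]))) hsT.ne
  · exact absurd (honly u (weight_apply_pos hu (by simp [expo]))) hTu.ne'

def IsReduced (a : DVar m →₀ ℕ) : Prop := ∀ r : Rule m, ¬ r.lhs ≤ a

theorem isReduced_antitone : Antitone (IsReduced (m := m)) :=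
  fun _ _ hab hb r hr => hb r (hr.trans hab)

namespace IsReduced

variable (ha : IsReduced a)
include ha

theorem weight_odd_eq_zero (hy : ∀ t, a (y t) = 0) (h1 : 0 < a x1) (hn : 0 < a xn)
    (t : Fin (m - 1)) : weight (expo m) a (2 * t + 3) = 0 := by
  by_contra h
  rcases pos_of_weight_odd_pos (Nat.pos_of_ne_zero h) with hJ | hyt | ⟨s, hst, hs⟩ | ⟨u, htu, hu⟩
  · exact ha (.r4 t) (single_add_single_add_single_le (by simp) (by simp) (by simp) hJ h1 hn)
  · simp [hy] at hyt
  · exact ha (.r3d s t hst)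
      (single_add_single_add_single_le (by simp) (by simp) (by simp) hs h1 hn)
  · exact ha (.r3d t u htu)
      (single_add_single_add_single_le (by simp) (by simp) (by simp) hu h1 hn)

theorem pos_y_top {w T : Fin (m - 1)} (hw : 0 < a (y w))
    (hT : 0 < weight (expo m) a (2 * T + 3))
    (htop : ∀ u : Fin (m - 1), 0 < weight (expo m) a (2 * u + 3) → u ≤ T) : 0 < a (y T) := by
  rcases (htop w (weight_apply_pos hw (by simp [expo]))).lt_or_eq with hwT | rfl
  swap
  · exact hw
  rcases pos_of_weight_odd_pos hT with hJ | hyT | ⟨s, hsT, hs⟩ | ⟨u, hTu, hu⟩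
  · exact (ha (.r3b w T hwT) (single_add_single_le (by simp) hJ hw)).elim
  · exact hyT
  · rcases lt_trichotomy w s with hws | rfl | hsw
    · exact (ha (.r2d w s T hws hsT) (single_add_single_le (by simp) hs hw)).elim
    · exact (ha (.r3c w T hsT) (single_add_single_le (by simp) hs hw)).elim
    · exact (ha (.r2e s w T hsw hwT) (single_add_single_le (by simp) hs hw)).elim
  · exact absurd (htop u (weight_apply_pos hu (by simp [expo]))) hTu.not_ge

theorem pos_xP_top (hy : ∀ t, a (y t) = 0) {S T : Fin (m - 1)} (hST : S < T)
    (hS : 0 < weight (expo m) a (2 * S + 3)) (hT : 0 < weight (expo m) a (2 * T + 3))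
    (htop : ∀ u : Fin (m - 1), 0 < weight (expo m) a (2 * u + 3) → u ≤ T)
    (hgap : ∀ u : Fin (m - 1), 0 < weight (expo m) a (2 * u + 3) → u < T → u ≤ S) :
    0 < a (xP S T hST) := by
  rw [pos_iff_ne_zero]
  intro h0
  have hT' : 0 < a (xJ T) ∨ ∃ s, ∃ hsS : s < S, 0 < a (xP s T (hsS.trans hST)) := by
    rcases pos_of_weight_odd_pos hT with hJ | hyT | ⟨s, hsT, hs⟩ | ⟨u, hTu, hu⟩
    · exact .inl hJ
    · simp [hy] at hyT
    · rcases (hgap s (weight_apply_pos hs (by simp [expo])) hsT).lt_or_eq with hsS | rfl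
      · exact .inr ⟨s, hsS, hs⟩
      · simp [h0] at hs
    · exact absurd (htop u (weight_apply_pos hu (by simp [expo]))) hTu.not_ge
  have hS' : 0 < a (xJ S) ∨ ∃ c, ∃ hcS : c < S, 0 < a (xP c S hcS) := by
    rcases pos_of_weight_odd_pos hS with hJ | hyS | ⟨c, hcS, hc⟩ | ⟨u, hSu, hu⟩
    · exact .inl hJ
    · simp [hy] at hyS
    · exact .inr ⟨c, hcS, hc⟩
    · have hu' : 0 < weight (expo m) a (2 * u + 3) := weight_apply_pos hu (by simp [expo])
      rcases (htop u hu').lt_or_eq with huT | rfl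
      · exact absurd (hgap u hu' huT) hSu.not_ge
      · simp [h0] at hu
  rcases hT' with hJT | ⟨s, hsS, hs⟩ <;> rcases hS' with hJS | ⟨c, hcS, hc⟩
  · exact ha (.r3a S T hST) (single_add_single_le (by simp [hST.ne]) hJS hJT)
  · exact ha (.r2c c S T hcS hST) (single_add_single_le (by simp) hJT hc)
  · exact ha (.r2b s S T hsS hST) (single_add_single_le (by simp) hJS hs)
  · rcases lt_trichotomy c s with hcs | rfl | hsc
    · exact ha (.r1a c s S T hcs hsS hST) (single_add_single_le (by simp [hST.ne]) hc hs)
    · exact ha (.r2a c S T hcS hST) (single_add_single_le (by simp [hST.ne]) hc hs)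
    · exact ha (.r1b s c S T hsc hcS hST) (single_add_single_le (by simp [hST.ne']) hs hc)

theorem exists_common_of_pos_y (hb : IsReduced b) (hab : weight (expo m) a = weight (expo m) b)
    {w : Fin (m - 1)} (hw : 0 < a (y w)) : ∃ v, 0 < a v ∧ 0 < b v := by
  have hwa : 0 < weight (expo m) a (2 * w + 3) := weight_apply_pos hw (by simp [expo])
  obtain ⟨w', hw'⟩ : ∃ t, 0 < b (y t) := by
    by_contra! hyb
    have hy (t : Fin (m - 1)) : b (y t) = 0 := Nat.le_zero.1 (hyb t)
    have h1 := pos_x1_of_weight_pos hy (hab ▸ weight_apply_pos hw (by simp [expo]))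
    have hn := pos_xn_of_weight_pos hy (hab ▸ weight_apply_pos hw (by simp [expo]))
    exact hwa.ne' (hab ▸ hb.weight_odd_eq_zero hy h1 hn w)
  obtain ⟨T, hT, htop⟩ := exists_max_of_exists (p := fun t : Fin (m - 1) =>
    0 < weight (expo m) a (2 * t + 3)) ⟨w, hwa⟩
  exact ⟨y T, ha.pos_y_top hw hT htop, hb.pos_y_top hw' (hab ▸ hT) (hab ▸ htop)⟩

theorem exists_common_of_forall_y_eq_zero (hb : IsReduced b)
    (hab : weight (expo m) a = weight (expo m) b) (ha0 : a ≠ 0) (hya : ∀ t, a (y t) = 0)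
    (hyb : ∀ t, b (y t) = 0) : ∃ v, 0 < a v ∧ 0 < b v := by
  by_cases hodd : ∃ t : Fin (m - 1), 0 < weight (expo m) a (2 * t + 3)
  · obtain ⟨T, hT, htop⟩ := exists_max_of_exists hodd
    by_cases hlow : ∃ u : Fin (m - 1), 0 < weight (expo m) a (2 * u + 3) ∧ u < T
    · obtain ⟨S, ⟨hS, hST⟩, hgap⟩ := exists_max_of_exists hlow
      refine ⟨xP S T hST, ha.pos_xP_top hya hST hS hT htop fun u hu huT => hgap u ⟨hu, huT⟩,
        hb.pos_xP_top hyb hST (hab ▸ hS) (hab ▸ hT) (hab ▸ htop) fun u hu huT => ?_⟩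
      exact hgap u ⟨hab ▸ hu, huT⟩
    · push Not at hlow
      have honly (u : Fin (m - 1)) (hu : 0 < weight (expo m) a (2 * u + 3)) : u = T :=
        (htop u hu).antisymm (hlow u hu)
      exact ⟨xJ T, pos_xJ_of_forall_eq hya hT honly,
        pos_xJ_of_forall_eq hyb (hab ▸ hT) fun u hu => honly u (hab ▸ hu)⟩
  · push Not at hodd
    obtain ⟨v, hv⟩ : ∃ v, 0 < a v := by
      simpa [pos_iff_ne_zero] using Finsupp.ne_iff.1 ha0
    cases v with
    | x1 => exact ⟨x1, hv, pos_x1_of_weight_pos hyb (hab ▸ weight_apply_pos hv (by simp [expo]))⟩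
    | xn => exact ⟨xn, hv, pos_xn_of_weight_pos hyb (hab ▸ weight_apply_pos hv (by simp [expo]))⟩
    | xJc t =>
      exact ⟨xJc t, hv, pos_xJc_of_weight_pos (hab ▸ weight_apply_pos hv (by simp [expo]))⟩
    | xJ t | y t | xP _ t _ =>
      exact ((hodd t).not_gt (weight_apply_pos hv (by simp [expo]))).elim

theorem exists_common (hb : IsReduced b) (hab : weight (expo m) a = weight (expo m) b)
    (ha0 : a ≠ 0) : ∃ v, 0 < a v ∧ 0 < b v := by
  by_cases hya : ∃ t, 0 < a (y t)
  · obtain ⟨w, hw⟩ := hya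
    exact ha.exists_common_of_pos_y hb hab hw
  by_cases hyb : ∃ t, 0 < b (y t)
  · obtain ⟨w, hw⟩ := hyb
    obtain ⟨v, hbv, hav⟩ := hb.exists_common_of_pos_y ha hab.symm hw
    exact ⟨v, hav, hbv⟩
  simp only [not_exists, not_lt, nonpos_iff_eq_zero] at hya hyb
  exact ha.exists_common_of_forall_y_eq_zero hb hab ha0 hya hyb

end IsReduced

theorem binomial_mem_span (K : Type*) [Field K] (hab : weight (expo m) a = weight (expo m) b) :
    monomial a (1 : K) - monomial b 1 ∈ Ideal.span (GD K m) := by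
  have hI (r : Rule m) := Ideal.subset_span (r.binomial_mem K)
  obtain ⟨a', ha', hEa, ha⟩ := exists_reduced_sub_mem Rule.lhs Rule.rhs (weight (expo m))
    (weight height) hI Rule.weight_expo_lhs_eq Rule.weight_height_rhs_lt a
  obtain ⟨b', hb', hEb, hb⟩ := exists_reduced_sub_mem Rule.lhs Rule.rhs (weight (expo m))
    (weight height) hI Rule.weight_expo_lhs_eq Rule.weight_height_rhs_lt b
  obtain rfl : a' = b' := eq_of_forall_exists_pos_pos isReduced_antitone (weight (expo m))
    (fun _ _ ha hb hab ha0 => ha.exists_common hb hab ha0) ha' hb' (hEa.trans (hab.trans hEb.symm))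
  simpa using sub_mem ha hb

end GD

theorem GD_span_eq_ker_general (K : Type*) [Field K] (m : ℕ) :
    Ideal.span (GD K m) = RingHom.ker (piD K m) := by
  refine le_antisymm (Ideal.span_le.2 (GD_subset_ker K m)) ?_
  rw [piD_eq_aeval]
  exact ker_aeval_monomial_le fun _ _ => GD.binomial_mem_span K

/-- the ideal of `R` generated by `𝒢_{D_{2m}}` equals the toric ideal
`I_{D_{2m}} = ker π`. -/
theorem GD_span_eq_ker (K : Type*) [Field K] (m : ℕ) (hm : 2 ≤ m) :
    Ideal.span (GD K m) = RingHom.ker (piD K m) :=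
  GD_span_eq_ker_general K m
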